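/- arXiv:1903.11680 — 5 statements merged into one kernel-verified Lean document; each statement's English description precedes it below -/
import Mathlib

section
/- Let f: R^p → R^n be a differentiable nonlinear mapping with Jacobian J(θ) ∈ R^{n×p}, let y ∈ R^n be corrupted labels, ỹ ∈ R^n uncorrupted labels, e = y − ỹ, θ_0 an initial point, and r_0 = f(θ_0) − y. Let S_+ ⊆ R^n be a subspace with orthogonal complement S_−. Assume that over the Euclidean ball D of radius 4‖r_0‖₂/α around θ_0: (i) α ≤ ‖J(θ)ᵀ v‖₂ ≤ β for every unit vector v ∈ S_+ and every θ ∈ D, and ‖J(θ)ᵀ w‖₂ = 0 for every w ∈ S_−; (ii) ‖J(θ_2) − J(θ_1)‖ ≤ L·‖θ_2 − θ_1‖₂ (spectral norm) for all θ_1, θ_2 ∈ R^p; and (iii) f(θ_0) − ỹ ∈ S_+. Run gradient descent θ_{τ+1} = θ_τ − η·J(θ_τ)ᵀ(f(θ_τ) − y) with η ≤ (1/(2β²))·min(1, αβ/(L‖r_0‖₂)). Then: every iterate satisfies ‖θ_τ − θ_0‖₂ ≤ 4‖r_0‖₂/α; and for any precision ν ≥ ‖Π_{S_+}(e)‖_∞,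 after τ ≥ (5/(ηα²))·log(‖r_0‖₂/ν) iterations one has ‖f(θ_τ) − ỹ‖_∞ ≤ 2ν. -/
/-!
Because the Jacobian maps into `S₊` and its adjoint kills `S₋`, gradient descent only sees the
projected residual `s_τ = Π_{S₊}(f θ_τ - y)`, and `f θ_τ - f θ₀` stays in `S₊`. One step is a
linear least-squares step, which lowers `‖s‖²` by `(3/2) η ‖Jᵀ s‖²` when `η β² ≤ 1/2`, plus a
Taylor remainder of size `(L/2) η² ‖Jᵀ s‖²`, which the step-size condition keeps below
`(α/4) η ‖Jᵀ s‖`. Together `‖s_{τ+1}‖² ≤ ‖s_τ‖² - (31/32) η ‖Jᵀ s_τ‖² ≤ (1 - (31/32) η α²) ‖s_τ‖²`,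
and since `α ‖s_τ‖ ≤ ‖Jᵀ s_τ‖` the step length `η ‖Jᵀ s_τ‖` is at most
`64 / (31 α) · (‖s_τ‖ - ‖s_{τ+1}‖)`: the path has length at most `64 ‖s₀‖ / (31 α)` and stays in
the ball. Finally `f θ_τ - ỹ = s_τ + Π_{S₊} e`, and `‖s_τ‖ ≤ ν` after the stated number of steps.
-/

open MeasureTheory Metric

noncomputable section

/-- Entrywise sup norm on Euclidean space. -/
def linfE {n : ℕ} (v : EuclideanSpace ℝ (Fin n)) : ℝ := ⨆ i, |v i|

open ContinuousLinearMap

theorem le_linfE {n : ℕ} (v : EuclideanSpace ℝ (Fin n)) (i : Fin n) : |v i| ≤ linfE v :=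
  le_ciSup (f := fun j => |v j|) (Finite.bddAbove_range _) i

theorem linfE_le_norm {n : ℕ} (v : EuclideanSpace ℝ (Fin n)) : linfE v ≤ ‖v‖ :=
  Real.iSup_le (fun i => (Real.norm_eq_abs _).symm.trans_le (PiLp.norm_apply_le v i))
    (norm_nonneg v)

theorem linfE_add_le {n : ℕ} (a b : EuclideanSpace ℝ (Fin n)) :
    linfE (a + b) ≤ linfE a + linfE b :=
  Real.iSup_le (fun i => (abs_add_le _ _).trans (add_le_add (le_linfE a i) (le_linfE b i)))
    (add_nonneg (Real.iSup_nonneg fun _ => abs_nonneg _) (Real.iSup_nonneg fun _ => abs_nonneg _))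

theorem mul_le_two_mul_sub_of_sq_le_sq_sub {a a' g α η c : ℝ} (ha : 0 ≤ a) (ha' : 0 ≤ a')
    (hα : 0 ≤ α) (hcη : 0 ≤ c * η) (hg : α * a ≤ g) (h : a' ^ 2 ≤ a ^ 2 - c * η * g ^ 2) :
    c * α * (η * g) ≤ 2 * (a - a') := by
  have hle : a' ≤ a :=
    (pow_le_pow_iff_left₀ ha' ha two_ne_zero).mp (by nlinarith [mul_nonneg hcη (sq_nonneg g)])
  have hg0 : 0 ≤ g := (mul_nonneg hα ha).trans hg
  have key : g * (c * α * (η * g)) ≤ g * (2 * (a - a')) := by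
    nlinarith [mul_le_mul_of_nonneg_left h hα, mul_le_mul_of_nonneg_right hg (sub_nonneg.mpr hle),
      mul_nonneg hα (mul_nonneg (sub_nonneg.mpr hle) (sub_nonneg.mpr hle))]
  rcases hg0.eq_or_lt with rfl | hgpos
  · simpa using hle
  · exact le_of_mul_le_mul_left key hgpos

theorem le_of_sq_le_one_sub_pow_mul_sq {d R ν κ : ℝ} {τ : ℕ} (hκ : κ ≤ 1) (hν : 0 < ν)
    (hR : 0 ≤ R) (hd : d ^ 2 ≤ (1 - κ) ^ τ * R ^ 2) (hτ : 2 * Real.log (R / ν) ≤ κ * τ) :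
    d ≤ ν := by
  suffices d ^ 2 ≤ ν ^ 2 from (abs_le_of_sq_le_sq' this hν.le).2
  rcases hR.eq_or_lt with rfl | hR
  · exact hd.trans (by simp; positivity)
  calc d ^ 2 ≤ (1 - κ) ^ τ * R ^ 2 := hd
    _ ≤ Real.exp (-(κ * τ)) * R ^ 2 := by
        rw [← neg_mul, mul_comm (-κ), Real.exp_nat_mul]
        gcongr
        exact Real.one_sub_le_exp_neg κ
    _ ≤ Real.exp (-Real.log ((R / ν) ^ 2)) * R ^ 2 := by
        rw [Real.log_pow]; push_cast; gcongr
    _ = ν ^ 2 := by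
        rw [Real.exp_neg, Real.exp_log (by positivity)]; field_simp

theorem step_size_bounds {α β L R η : ℝ} (hα : 0 < α) (hβ : 0 < β) (hη : 0 < η)
    (h : η ≤ 1 / (2 * β ^ 2) * min 1 (α * β / (L * R))) :
    η * β ^ 2 ≤ 1 / 2 ∧ 2 * β * L * η * R ≤ α := by
  have hk : 0 < 1 / (2 * β ^ 2) := by positivity
  constructor
  · have h1 := h.trans (mul_le_mul_of_nonneg_left (min_le_left _ _) hk.le)
    rw [mul_one, le_div_iff₀ (by positivity)] at h1
    linarith
  · have h2 := h.trans (mul_le_mul_of_nonneg_left (min_le_right _ _) hk.le)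
    have hLR : 0 < L * R := (div_pos_iff_of_pos_left (mul_pos hα hβ)).mp
      ((mul_pos_iff_of_pos_left hk).mp (hη.trans_le h2))
    rw [← mul_div_assoc, le_div_iff₀ hLR] at h2
    field_simp at h2
    nlinarith

section Calculus

variable {E F : Type*} [NormedAddCommGroup E] [NormedSpace ℝ E] [NormedAddCommGroup F]
  [NormedSpace ℝ F] {f : E → F} {J : E → E →L[ℝ] F}

theorem norm_sub_sub_fderiv_le_of_lipschitz {L : ℝ} {a : E}
    (hJ : ∀ x, HasFDerivAt f (J x) x) (hLip : ∀ x, ‖J x - J a‖ ≤ L * ‖x - a‖) (b : E) :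
    ‖f b - f a - J a (b - a)‖ ≤ L / 2 * ‖b - a‖ ^ 2 := by
  set h := b - a
  have hderiv : ∀ t : ℝ, HasDerivAt (fun t : ℝ => f (a + t • h) - f a - t • J a h)
      (J (a + t • h) h - J a h) t := fun t => by
    have hline : HasDerivAt (fun t : ℝ => a + t • h) h t := by
      simpa using ((hasDerivAt_id t).smul_const h).const_add a
    simpa using (((hJ _).comp_hasDerivAt t hline).sub_const (f a)).fun_sub
      ((hasDerivAt_id t).smul_const (J a h))
  have hbound : ∀ t ∈ Set.Ico (0 : ℝ) 1, ‖J (a + t • h) h - J a h‖ ≤ L * ‖h‖ ^ 2 * t := by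
    intro t ht
    calc ‖J (a + t • h) h - J a h‖ = ‖(J (a + t • h) - J a) h‖ := rfl
      _ ≤ L * ‖a + t • h - a‖ * ‖h‖ := (le_opNorm _ _).trans
          (mul_le_mul_of_nonneg_right (hLip _) (norm_nonneg h))
      _ = L * ‖h‖ ^ 2 * t := by
          rw [add_sub_cancel_left, norm_smul, Real.norm_of_nonneg ht.1]; ring
  have hB : ∀ t : ℝ, HasDerivAt (fun t : ℝ => L / 2 * ‖h‖ ^ 2 * t ^ 2) (L * ‖h‖ ^ 2 * t) t :=
    fun t => ((hasDerivAt_pow 2 t).const_mul (L / 2 * ‖h‖ ^ 2)).congr_deriv (by ring)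
  simpa [h] using image_norm_le_of_norm_deriv_right_le_deriv_boundary
    (fun t _ => (hderiv t).continuousAt.continuousWithinAt)
    (fun t _ => (hderiv t).hasDerivWithinAt) (by simp) hB hbound
    (Set.right_mem_Icc.mpr zero_le_one)

end Calculus

section InnerProduct

variable {E F : Type*} [NormedAddCommGroup E] [InnerProductSpace ℝ E]
  [NormedAddCommGroup F] [InnerProductSpace ℝ F] {K : Submodule ℝ F} [K.HasOrthogonalProjection]

theorem sub_mem_of_fderivWithin_apply_mem {f : E → F} {J : E → E →L[ℝ] F} {D : Set E}
    (hD : Convex ℝ D) (hJ : ∀ x ∈ D, HasFDerivWithinAt f (J x) D x)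
    (hK : ∀ x ∈ D, ∀ v, J x v ∈ K) {a b : E} (ha : a ∈ D) (hb : b ∈ D) : f b - f a ∈ K := by
  have hconst := hD.norm_image_sub_le_of_norm_hasFDerivWithin_le
    (f := fun x => Kᗮ.starProjection (f x)) (C := 0)
    (fun x hx => Kᗮ.starProjection.hasFDerivAt.comp_hasFDerivWithinAt x (hJ x hx))
    (fun x hx => opNorm_le_bound _ le_rfl fun v => by
      simp [Submodule.starProjection_orthogonal_apply_eq_zero (hK x hx v)]) ha hb
  rw [zero_mul, norm_le_zero_iff, ← map_sub, Submodule.starProjection_apply_eq_zero_iff,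
    K.orthogonal_orthogonal] at hconst
  exact hconst

theorem sub_eq_starProjection_add_starProjection {f : E → F} {J : E → E →L[ℝ] F} {D : Set E}
    (hD : Convex ℝ D) (hJ : ∀ x ∈ D, HasFDerivWithinAt f (J x) D x)
    (hK : ∀ x ∈ D, ∀ v, J x v ∈ K) {a b : E} (ha : a ∈ D) (hb : b ∈ D) {y c : F}
    (hc : f a - c ∈ K) : f b - c = K.starProjection (f b - y) + K.starProjection (y - c) := by
  have hmem : f b - c ∈ K := by
    simpa using K.add_mem (sub_mem_of_fderivWithin_apply_mem hD hJ hK ha hb) hc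
  rw [← map_add, sub_add_sub_cancel, K.starProjection_eq_self_iff.mpr hmem]

namespace ContinuousLinearMap

variable [CompleteSpace E] [CompleteSpace F]

theorem apply_mem_of_adjoint_eq_zero {A : E →L[ℝ] F} (h : ∀ w ∈ Kᗮ, A.adjoint w = 0) (x : E) :
    A x ∈ K := by
  rw [← K.orthogonal_orthogonal, Submodule.mem_orthogonal]
  intro w hw
  rw [← adjoint_inner_left, h w hw, inner_zero_left]

theorem adjoint_starProjection_of_apply_mem {A : E →L[ℝ] F} (h : ∀ x, A x ∈ K) (v : F) :
    A.adjoint (K.starProjection v) = A.adjoint v := by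
  have hPA : K.starProjection ∘L A = A := ext fun x => K.starProjection_eq_self_iff.mpr (h x)
  have := congrArg adjoint hPA
  rw [adjoint_comp, (isSelfAdjoint_starProjection K).adjoint_eq] at this
  exact congrArg (· v) this

theorem norm_sq_sub_smul_apply_adjoint_le {A : E →L[ℝ] F} {β η : ℝ} (hA : ‖A‖ ≤ β)
    (hη : 0 ≤ η) (hηβ : η * β ^ 2 ≤ 1 / 2) (s : F) :
    ‖s - η • A (A.adjoint s)‖ ^ 2 ≤ ‖s‖ ^ 2 - 3 / 2 * η * ‖A.adjoint s‖ ^ 2 := by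
  set g := ‖A.adjoint s‖
  have hinner : inner ℝ s (η • A (A.adjoint s)) = η * g ^ 2 := by
    rw [real_inner_smul_right, ← adjoint_inner_left, real_inner_self_eq_norm_sq]
  have hAA : ‖A (A.adjoint s)‖ ≤ β * g :=
    (le_opNorm _ _).trans (mul_le_mul_of_nonneg_right hA (norm_nonneg _))
  have hsq : ‖A (A.adjoint s)‖ ^ 2 ≤ β ^ 2 * g ^ 2 := by
    rw [← mul_pow]; exact pow_le_pow_left₀ (norm_nonneg _) hAA 2
  rw [norm_sub_sq_real, hinner, norm_smul, Real.norm_of_nonneg hη, mul_pow]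
  nlinarith [mul_le_mul_of_nonneg_left hsq (sq_nonneg η), mul_le_mul_of_nonneg_right hηβ
    (mul_nonneg hη (sq_nonneg g))]

theorem norm_sq_sub_smul_apply_adjoint_add_le {A : E →L[ℝ] F} {α β η : ℝ} (hA : ‖A‖ ≤ β)
    (hη : 0 ≤ η) (hηβ : η * β ^ 2 ≤ 1 / 2) (hηα : η * α ^ 2 ≤ 1 / 2) {s e : F}
    (hs : α * ‖s‖ ≤ ‖A.adjoint s‖) (he : ‖e‖ ≤ α / 4 * η * ‖A.adjoint s‖) :
    ‖s - η • A (A.adjoint s) + e‖ ^ 2 ≤ ‖s‖ ^ 2 - 31 / 32 * η * ‖A.adjoint s‖ ^ 2 := by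
  have ha := norm_sq_sub_smul_apply_adjoint_le hA hη hηβ s
  set g := ‖A.adjoint s‖
  set a := s - η • A (A.adjoint s)
  have ha_le : ‖a‖ ≤ ‖s‖ := by
    nlinarith [norm_nonneg a, norm_nonneg s, mul_nonneg hη (sq_nonneg g)]
  have hcross : 2 * ‖a‖ * ‖e‖ ≤ η / 2 * g ^ 2 := by
    calc 2 * ‖a‖ * ‖e‖ ≤ 2 * (‖s‖ * (α / 4 * η * g)) := by
          rw [mul_assoc]; gcongr
      _ = η * g / 2 * (α * ‖s‖) := by ring
      _ ≤ η * g / 2 * g := by gcongr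
      _ = η / 2 * g ^ 2 := by ring
  have he_sq : ‖e‖ ^ 2 ≤ η / 32 * g ^ 2 := by
    nlinarith [pow_le_pow_left₀ (norm_nonneg e) he 2, mul_le_mul_of_nonneg_right hηα
      (mul_nonneg hη (sq_nonneg g))]
  nlinarith [norm_add_le a e, norm_nonneg (a + e)]

end ContinuousLinearMap

end InnerProduct

section LowRankJacobian

variable {E F : Type*} [NormedAddCommGroup E] [InnerProductSpace ℝ E] [CompleteSpace E]
  [NormedAddCommGroup F] [InnerProductSpace ℝ F] [CompleteSpace F]

/-- Assumption (i) in homogeneous form: on `D`, `J x` maps into `S` and the singular values of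
`J x` restricted to `S` lie in `[α, β]`. -/
structure LowRankJacobianOn (J : E → E →L[ℝ] F) (S : Submodule ℝ F) (D : Set E) (α β : ℝ) :
    Prop where
  apply_mem : ∀ x ∈ D, ∀ v, J x v ∈ S
  mul_norm_le_norm_adjoint : ∀ x ∈ D, ∀ u ∈ S, α * ‖u‖ ≤ ‖(J x).adjoint u‖
  norm_le : ∀ x ∈ D, ‖J x‖ ≤ β

variable {f : E → F} {J : E → E →L[ℝ] F} {S : Submodule ℝ F} {D : Set E} {y : F}
  {α β L η R : ℝ}

namespace LowRankJacobianOn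

theorem norm_adjoint_apply_le (hlr : LowRankJacobianOn J S D α β) {x : E} (hx : x ∈ D) (v : F) :
    ‖(J x).adjoint v‖ ≤ β * ‖v‖ :=
  (le_opNorm _ _).trans (mul_le_mul_of_nonneg_right
    ((LinearIsometryEquiv.norm_map adjoint (J x)).trans_le (hlr.norm_le x hx)) (norm_nonneg v))

variable [S.HasOrthogonalProjection]

theorem of_norm_eq_one (hβ : 0 ≤ β)
    (hbounds : ∀ x ∈ D, ∀ u ∈ S, ‖u‖ = 1 → α ≤ ‖(J x).adjoint u‖ ∧ ‖(J x).adjoint u‖ ≤ β)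
    (hnull : ∀ x ∈ D, ∀ w ∈ Sᗮ, ‖(J x).adjoint w‖ = 0) : LowRankJacobianOn J S D α β := by
  have happly : ∀ x ∈ D, ∀ v, J x v ∈ S := fun x hx =>
    apply_mem_of_adjoint_eq_zero fun w hw => norm_eq_zero.mp (hnull x hx w hw)
  have hscaled : ∀ x ∈ D, ∀ u ∈ S,
      α * ‖u‖ ≤ ‖(J x).adjoint u‖ ∧ ‖(J x).adjoint u‖ ≤ β * ‖u‖ := by
    intro x hx u hu
    rcases eq_or_ne u 0 with rfl | hu0
    · simp
    have hpos : 0 < ‖u‖ := norm_pos_iff.mpr hu0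
    obtain ⟨hlo, hhi⟩ := hbounds x hx (‖u‖⁻¹ • u) (S.smul_mem _ hu)
      (by rw [norm_smul, norm_inv, norm_norm, inv_mul_cancel₀ hpos.ne'])
    rw [map_smul, norm_smul, norm_inv, norm_norm] at hlo hhi
    exact ⟨mul_comm α ‖u‖ ▸ (le_inv_mul_iff₀ hpos).mp hlo,
      mul_comm β ‖u‖ ▸ (inv_mul_le_iff₀ hpos).mp hhi⟩
  refine ⟨happly, fun x hx u hu => (hscaled x hx u hu).1, fun x hx => ?_⟩
  rw [← LinearIsometryEquiv.norm_map adjoint]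
  refine opNorm_le_bound _ hβ fun v => ?_
  rw [← adjoint_starProjection_of_apply_mem (happly x hx) v]
  exact (hscaled x hx _ (S.starProjection_apply_mem v)).2.trans
    (mul_le_mul_of_nonneg_left (S.norm_starProjection_apply_le v) hβ)

theorem gd_step_norm_sq_le (hlr : LowRankJacobianOn J S D α β) (hD : Convex ℝ D)
    (hJ : ∀ x, HasFDerivAt f (J x) x) (hsmooth : ∀ x₁ x₂, ‖J x₂ - J x₁‖ ≤ L * ‖x₂ - x₁‖)
    (hα : 0 ≤ α) (hαβ : α ≤ β) (hη : 0 ≤ η) (hηβ : η * β ^ 2 ≤ 1 / 2)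
    (hηL : 2 * β * L * η * R ≤ α) {x x' : E} (hx : x ∈ D) (hx' : x' ∈ D)
    (hstep : x' = x - η • (J x).adjoint (f x - y)) (hR : ‖S.starProjection (f x - y)‖ ≤ R) :
    ‖S.starProjection (f x' - y)‖ ^ 2 ≤ ‖S.starProjection (f x - y)‖ ^ 2
      - 31 / 32 * η * ‖(J x).adjoint (S.starProjection (f x - y))‖ ^ 2 := by
  set s := S.starProjection (f x - y)
  set g := ‖(J x).adjoint s‖
  have hdx : x' - x = -(η • (J x).adjoint s) := by
    rw [hstep, ← adjoint_starProjection_of_apply_mem (hlr.apply_mem x hx)]; abel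
  have hincr : f x' - f x ∈ S := sub_mem_of_fderivWithin_apply_mem hD
    (fun z _ => (hJ z).hasFDerivWithinAt) hlr.apply_mem hx hx'
  have hs' : S.starProjection (f x' - y)
      = s - η • J x ((J x).adjoint s) + (f x' - f x - J x (x' - x)) := by
    rw [show f x' - y = (f x - y) + (f x' - f x) by abel, map_add,
      S.starProjection_eq_self_iff.mpr hincr, hdx, map_neg, map_smul]
    abel
  have hLg : L * η * g ≤ α / 2 := by
    have hg : g ≤ β * R := (hlr.norm_adjoint_apply_le hx s).trans
      (mul_le_mul_of_nonneg_left hR (hα.trans hαβ))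
    rcases le_total 0 L with hL | hL
    · nlinarith [mul_le_mul_of_nonneg_left hg (mul_nonneg hL hη)]
    · nlinarith [mul_nonneg (mul_nonneg (neg_nonneg.mpr hL) hη) (norm_nonneg ((J x).adjoint s))]
  have hrem : ‖f x' - f x - J x (x' - x)‖ ≤ α / 4 * η * g :=
    calc _ ≤ L / 2 * ‖x' - x‖ ^ 2 :=
          norm_sub_sub_fderiv_le_of_lipschitz hJ (fun z => hsmooth x z) x'
      _ = L * η * g / 2 * (η * g) := by
          rw [hdx, norm_neg, norm_smul, Real.norm_of_nonneg hη]; ring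
      _ ≤ α / 2 / 2 * (η * g) := by gcongr
      _ = α / 4 * η * g := by ring
  rw [hs']
  exact norm_sq_sub_smul_apply_adjoint_add_le (hlr.norm_le x hx) hη hηβ
    ((mul_le_mul_of_nonneg_left (pow_le_pow_left₀ hα hαβ 2) hη).trans hηβ)
    (hlr.mul_norm_le_norm_adjoint x hx s (S.starProjection_apply_mem _)) hrem

theorem gd_step_potential {x₀ : E} {ρ : ℝ} (hlr : LowRankJacobianOn J S (closedBall x₀ ρ) α β)
    (hJ : ∀ x, HasFDerivAt f (J x) x) (hsmooth : ∀ x₁ x₂, ‖J x₂ - J x₁‖ ≤ L * ‖x₂ - x₁‖)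
    (hα : 0 < α) (hαβ : α ≤ β) (hη : 0 ≤ η) (hηβ : η * β ^ 2 ≤ 1 / 2)
    (hηL : 2 * β * L * η * R ≤ α) (hρ : 3 * R ≤ α * ρ) {x x' : E}
    (hstep : x' = x - η • (J x).adjoint (f x - y))
    (hx : 31 * α * ‖x - x₀‖ + 64 * ‖S.starProjection (f x - y)‖ ≤ 64 * R) :
    31 * α * ‖x' - x₀‖ + 64 * ‖S.starProjection (f x' - y)‖
        ≤ 31 * α * ‖x - x₀‖ + 64 * ‖S.starProjection (f x - y)‖ ∧
      ‖S.starProjection (f x' - y)‖ ^ 2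
        ≤ (1 - 31 / 32 * η * α ^ 2) * ‖S.starProjection (f x - y)‖ ^ 2 := by
  set s := S.starProjection (f x - y)
  set s' := S.starProjection (f x' - y)
  set g := ‖(J x).adjoint s‖
  have hαx : 0 ≤ α * ‖x - x₀‖ := mul_nonneg hα.le (norm_nonneg _)
  have hsR : ‖s‖ ≤ R := by linarith
  have hR : 0 ≤ R := (norm_nonneg s).trans hsR
  have hmem : ∀ z, α * ‖z - x₀‖ ≤ 3 * R → z ∈ closedBall x₀ ρ := fun z hz =>
    mem_closedBall_iff_norm.mpr (le_of_mul_le_mul_left (hz.trans hρ) hα)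
  have hxD : x ∈ closedBall x₀ ρ := hmem x (by linarith [norm_nonneg s])
  have hmove : ‖x' - x‖ = η * g := by
    rw [hstep, ← adjoint_starProjection_of_apply_mem (hlr.apply_mem x hxD), sub_sub_cancel_left,
      norm_neg, norm_smul, Real.norm_of_nonneg hη]
  have htri := mul_le_mul_of_nonneg_left (norm_sub_le_norm_sub_add_norm_sub x' x x₀) hα.le
  rw [hmove] at htri
  have hx'D : x' ∈ closedBall x₀ ρ := by
    have hαηg : α * (η * g) ≤ R / 2 := by
      have hg := (hlr.norm_adjoint_apply_le hxD s).trans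
        (mul_le_mul_of_nonneg_left hsR (hα.le.trans hαβ))
      nlinarith [mul_le_mul_of_nonneg_left hg (mul_nonneg hα.le hη),
        mul_le_mul_of_nonneg_left hαβ (mul_nonneg hη (hα.le.trans hαβ))]
    exact hmem x' (by linarith [norm_nonneg s])
  have hdesc : ‖s'‖ ^ 2 ≤ ‖s‖ ^ 2 - 31 / 32 * η * g ^ 2 :=
    gd_step_norm_sq_le hlr (convex_closedBall _ _) hJ hsmooth hα.le hαβ hη hηβ hηL hxD hx'D hstep
      hsR
  have hgα : α * ‖s‖ ≤ g := hlr.mul_norm_le_norm_adjoint x hxD s (S.starProjection_apply_mem _)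
  have hshrink := mul_le_two_mul_sub_of_sq_le_sq_sub (norm_nonneg s) (norm_nonneg s') hα.le
    (by positivity) hgα hdesc
  constructor
  · linarith
  · nlinarith [mul_le_mul_of_nonneg_left
      (pow_le_pow_left₀ (mul_nonneg hα.le (norm_nonneg s)) hgα 2) hη]

theorem gd_iterates_bounds {θ : ℕ → E} {ρ : ℝ}
    (hlr : LowRankJacobianOn J S (closedBall (θ 0) ρ) α β)
    (hJ : ∀ x, HasFDerivAt f (J x) x) (hsmooth : ∀ x₁ x₂, ‖J x₂ - J x₁‖ ≤ L * ‖x₂ - x₁‖)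
    (hα : 0 < α) (hαβ : α ≤ β) (hη : 0 ≤ η) (hηβ : η * β ^ 2 ≤ 1 / 2)
    (hηL : 2 * β * L * η * R ≤ α) (hρ : 3 * R ≤ α * ρ)
    (hR : ‖S.starProjection (f (θ 0) - y)‖ ≤ R)
    (hstep : ∀ τ, θ (τ + 1) = θ τ - η • (J (θ τ)).adjoint (f (θ τ) - y)) (τ : ℕ) :
    31 * α * ‖θ τ - θ 0‖ + 64 * ‖S.starProjection (f (θ τ) - y)‖ ≤ 64 * R ∧
      ‖S.starProjection (f (θ τ) - y)‖ ^ 2 ≤ (1 - 31 / 32 * η * α ^ 2) ^ τ * R ^ 2 := by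
  induction τ with
  | zero =>
    simp only [sub_self, norm_zero, mul_zero, zero_add, pow_zero, one_mul]
    exact ⟨by linarith, pow_le_pow_left₀ (norm_nonneg _) hR 2⟩
  | succ τ ih =>
    obtain ⟨hpot, hcontr⟩ :=
      hlr.gd_step_potential hJ hsmooth hα hαβ hη hηβ hηL hρ (hstep τ) ih.1
    have hq : 0 ≤ 1 - 31 / 32 * η * α ^ 2 := by
      nlinarith [mul_le_mul_of_nonneg_left (pow_le_pow_left₀ hα.le hαβ 2) hη]
    refine ⟨hpot.trans ih.1, hcontr.trans ?_⟩
    calc _ ≤ (1 - 31 / 32 * η * α ^ 2) * ((1 - 31 / 32 * η * α ^ 2) ^ τ * R ^ 2) :=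
          mul_le_mul_of_nonneg_left ih.2 hq
      _ = _ := by ring

end LowRankJacobianOn

end LowRankJacobian

theorem gradient_descent_label_corruption_general
    {p n : ℕ}
    (f : EuclideanSpace ℝ (Fin p) → EuclideanSpace ℝ (Fin n))
    (J : EuclideanSpace ℝ (Fin p) → (EuclideanSpace ℝ (Fin p) →L[ℝ] EuclideanSpace ℝ (Fin n)))
    (hJ : ∀ θ, HasFDerivAt f (J θ) θ)
    (y ytil : EuclideanSpace ℝ (Fin n))
    (Splus : Submodule ℝ (EuclideanSpace ℝ (Fin n)))
    (θ0 : EuclideanSpace ℝ (Fin p)) (α β L η : ℝ)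
    (hα : 0 < α) (hβ : α ≤ β)
    -- (i) low-rank Jacobian over the ball of radius 4‖r₀‖/α around θ₀
    (hlow : ∀ θ ∈ closedBall θ0 (4 * ‖f θ0 - y‖ / α),
      ∀ u : EuclideanSpace ℝ (Fin n), u ∈ Splus → ‖u‖ = 1 →
        α ≤ ‖(J θ).adjoint u‖ ∧ ‖(J θ).adjoint u‖ ≤ β)
    (hnull : ∀ θ ∈ closedBall θ0 (4 * ‖f θ0 - y‖ / α),
      ∀ w : EuclideanSpace ℝ (Fin n), w ∈ Splusᗮ → ‖(J θ).adjoint w‖ = 0)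
    -- (ii) smoothness of the Jacobian
    (hsmooth : ∀ θ1 θ2 : EuclideanSpace ℝ (Fin p), ‖J θ2 - J θ1‖ ≤ L * ‖θ2 - θ1‖)
    -- (iii) the initial clean residual lies on the signal subspace
    (hinit : f θ0 - ytil ∈ Splus)
    -- step size
    (hη : 0 < η) (hηle : η ≤ 1 / (2 * β ^ 2) * min 1 (α * β / (L * ‖f θ0 - y‖)))
    -- gradient descent iterates
    (θseq : ℕ → EuclideanSpace ℝ (Fin p))
    (hθ0 : θseq 0 = θ0)
    (hstep : ∀ τ : ℕ, θseq (τ + 1) = θseq τ - η • (J (θseq τ)).adjoint (f (θseq τ) - y)) :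
    -- conclusion: all iterates stay close to the initialization, and after enough
    -- iterations the residual w.r.t. the uncorrupted labels is uniformly small
    (∀ τ : ℕ, ‖θseq τ - θ0‖ ≤ 4 * ‖f θ0 - y‖ / α) ∧
    (∀ ν : ℝ, 0 < ν →
      linfE (Splus.orthogonalProjectionOnto (y - ytil) : EuclideanSpace ℝ (Fin n)) ≤ ν →
      ∀ τ : ℕ, 5 / (η * α ^ 2) * Real.log (‖f θ0 - y‖ / ν) ≤ (τ : ℝ) →
        linfE (f (θseq τ) - ytil) ≤ 2 * ν) := by
  subst hθ0
  set R := ‖f (θseq 0) - y‖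
  obtain ⟨hηβ, hηL⟩ := step_size_bounds hα (hα.trans_le hβ) hη hηle
  have hlr : LowRankJacobianOn J Splus (closedBall (θseq 0) (4 * R / α)) α β :=
    .of_norm_eq_one (hα.le.trans hβ) hlow hnull
  have hgd := hlr.gd_iterates_bounds hJ hsmooth hα hβ hη.le hηβ hηL
    (by rw [mul_div_cancel₀ _ hα.ne']; linarith [norm_nonneg (f (θseq 0) - y)])
    (Splus.norm_starProjection_apply_le _) hstep
  have hball : ∀ τ, ‖θseq τ - θseq 0‖ ≤ 4 * R / α := fun τ => by
    rw [le_div_iff₀ hα]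
    linarith [(hgd τ).1, norm_nonneg (Splus.starProjection (f (θseq τ) - y)),
      norm_nonneg (f (θseq 0) - y)]
  refine ⟨hball, fun ν hν hνe τ hτ => ?_⟩
  have hτ' : 2 * Real.log (R / ν) ≤ 31 / 32 * η * α ^ 2 * τ := by
    rw [div_mul_eq_mul_div, div_le_iff₀ (by positivity)] at hτ
    rcases le_total 0 (Real.log (R / ν)) with h | h
    · linarith
    · nlinarith [mul_nonneg (mul_nonneg hη.le (sq_nonneg α)) τ.cast_nonneg]
  have hsν : ‖Splus.starProjection (f (θseq τ) - y)‖ ≤ ν :=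
    le_of_sq_le_one_sub_pow_mul_sq
      (by nlinarith [mul_le_mul_of_nonneg_left (pow_le_pow_left₀ hα.le hβ 2) hη.le])
      hν (norm_nonneg _) (hgd τ).2 hτ'
  rw [sub_eq_starProjection_add_starProjection (convex_closedBall _ _)
    (fun z _ => (hJ z).hasFDerivWithinAt) hlr.apply_mem (mem_closedBall_self (by positivity))
    (mem_closedBall_iff_norm.mpr (hball τ)) hinit]
  calc _ ≤ _ := linfE_add_le _ _
    _ ≤ ν + ν := add_le_add ((linfE_le_norm _).trans hsν) hνe
    _ = 2 * ν := by ring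

/-- Meta-theorem: gradient descent with label corruption under a
low-rank Jacobian. -/
theorem gradient_descent_label_corruption
    {p n : ℕ}
    (f : EuclideanSpace ℝ (Fin p) → EuclideanSpace ℝ (Fin n))
    (J : EuclideanSpace ℝ (Fin p) → (EuclideanSpace ℝ (Fin p) →L[ℝ] EuclideanSpace ℝ (Fin n)))
    (hJ : ∀ θ, HasFDerivAt f (J θ) θ)
    (y ytil : EuclideanSpace ℝ (Fin n))
    (Splus : Submodule ℝ (EuclideanSpace ℝ (Fin n)))
    (θ0 : EuclideanSpace ℝ (Fin p)) (α β L η : ℝ)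
    (hα : 0 < α) (hβ : α ≤ β) (hL : 0 < L)
    -- (i) low-rank Jacobian over the ball of radius 4‖r₀‖/α around θ₀
    (hlow : ∀ θ ∈ closedBall θ0 (4 * ‖f θ0 - y‖ / α),
      ∀ u : EuclideanSpace ℝ (Fin n), u ∈ Splus → ‖u‖ = 1 →
        α ≤ ‖(J θ).adjoint u‖ ∧ ‖(J θ).adjoint u‖ ≤ β)
    (hnull : ∀ θ ∈ closedBall θ0 (4 * ‖f θ0 - y‖ / α),
      ∀ w : EuclideanSpace ℝ (Fin n), w ∈ Splusᗮ → ‖(J θ).adjoint w‖ = 0)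
    -- (ii) smoothness of the Jacobian
    (hsmooth : ∀ θ1 θ2 : EuclideanSpace ℝ (Fin p), ‖J θ2 - J θ1‖ ≤ L * ‖θ2 - θ1‖)
    -- (iii) the initial clean residual lies on the signal subspace
    (hinit : f θ0 - ytil ∈ Splus)
    -- step size
    (hη : 0 < η) (hηle : η ≤ 1 / (2 * β ^ 2) * min 1 (α * β / (L * ‖f θ0 - y‖)))
    -- gradient descent iterates
    (θseq : ℕ → EuclideanSpace ℝ (Fin p))
    (hθ0 : θseq 0 = θ0)
    (hstep : ∀ τ : ℕ, θseq (τ + 1) = θseq τ - η • (J (θseq τ)).adjoint (f (θseq τ) - y)) :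
    -- conclusion: all iterates stay close to the initialization, and after enough
    -- iterations the residual w.r.t. the uncorrupted labels is uniformly small
    (∀ τ : ℕ, ‖θseq τ - θ0‖ ≤ 4 * ‖f θ0 - y‖ / α) ∧
    (∀ ν : ℝ, 0 < ν →
      linfE (Splus.orthogonalProjectionOnto (y - ytil) : EuclideanSpace ℝ (Fin n)) ≤ ν →
      ∀ τ : ℕ, 5 / (η * α ^ 2) * Real.log (‖f θ0 - y‖ / ν) ≤ (τ : ℝ) →
        linfE (f (θseq τ) - ytil) ≤ 2 * ν) :=
  gradient_descent_label_corruption_general f J hJ y ytil Splus θ0 α β L η hα hβ hlow hnull hsmooth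
    hinit hη hηle θseq hθ0 hstep
end
end

section
/- Let f: R^p → R^n be differentiable with Jacobian J(θ), let y ∈ R^n, θ_0 ∈ R^p, and r_0 = f(θ_0) − y. Let S_+ ⊆ R^n be a subspace with orthogonal complement S_−, and set E_+ = ‖Π_{S_+}(r_0)‖₂ and E_− = ‖Π_{S_−}(r_0)‖₂. Suppose that over a Euclidean ball D of radius R around θ_0 the Jacobian is bimodal with parameters β ≥ α ≥ ε > 0: for all θ ∈ D, α ≤ ‖J(θ)ᵀ v‖₂ ≤ β for every unit v ∈ S_+, and ‖J(θ)ᵀ v‖₂ ≤ ε for every unit v ∈ S_−. If R < max(E_+/β, E_−/ε), then there exists no θ ∈ D with f(θ) = y. In particular, if the bimodal condition holds over D = R^p, then any θ with f(θ) = y satisfies ‖θ − θ_0‖₂ ≥ max(E_+/β, E_−/ε). -/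
/-!
Project the residual `f θ₀ - f θ` onto a subspace `S`. The map `P_S ∘ f` has derivative
`P_S ∘ J`, whose operator norm equals that of its adjoint `J† ∘ ι_S`, which is at most the bound
`c` of `J†` on unit vectors of `S`. The mean value inequality then gives
`‖P_S (f θ₀ - f θ)‖ ≤ c ‖θ - θ₀‖`; at a fit `f θ = y` this reads `E / c ≤ ‖θ - θ₀‖`, once with
`(S, c) = (S₊, β)` and once with `(S, c) = (S₋, ε)`.
-/

open Metric Set ContinuousLinearMap

variable {E F : Type*} [NormedAddCommGroup E] [InnerProductSpace ℝ E] [CompleteSpace E]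
  [NormedAddCommGroup F] [InnerProductSpace ℝ F] [CompleteSpace F]

theorem Submodule.norm_orthogonalProjectionOnto_comp_le (S : Submodule ℝ F) [CompleteSpace S]
    (A : E →L[ℝ] F) {c : ℝ} (hc : 0 ≤ c) (hA : ∀ v ∈ S, ‖v‖ = 1 → ‖A.adjoint v‖ ≤ c) :
    ‖S.orthogonalProjectionOnto ∘L A‖ ≤ c := by
  rw [← adjoint.norm_map, adjoint_comp, S.adjoint_orthogonalProjectionOnto]
  exact opNorm_le_of_unit_norm hc fun v hv => hA v v.2 hv

theorem Convex.norm_orthogonalProjectionOnto_image_sub_le {f : E → F} {J : E → E →L[ℝ] F}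
    {s : Set E} (hs : Convex ℝ s) (hf : ∀ x ∈ s, HasFDerivWithinAt f (J x) s x)
    (S : Submodule ℝ F) [CompleteSpace S] {c : ℝ} (hc : 0 ≤ c)
    (hJ : ∀ x ∈ s, ∀ v ∈ S, ‖v‖ = 1 → ‖(J x).adjoint v‖ ≤ c) {x y : E} (hx : x ∈ s) (hy : y ∈ s) :
    ‖(S.orthogonalProjectionOnto (f y - f x) : F)‖ ≤ c * ‖y - x‖ := by
  rw [← Submodule.coe_norm, map_sub]
  exact hs.norm_image_sub_le_of_norm_hasFDerivWithin_le
    (fun z hz => S.orthogonalProjectionOnto.hasFDerivAt.comp_hasFDerivWithinAt z (hf z hz))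
    (fun z hz => S.norm_orthogonalProjectionOnto_comp_le (J z) hc (hJ z hz)) hx hy

theorem Convex.norm_orthogonalProjectionOnto_div_le_of_eq {f : E → F} {J : E → E →L[ℝ] F}
    {s : Set E} (hs : Convex ℝ s) (hf : ∀ x ∈ s, HasFDerivWithinAt f (J x) s x)
    (S : Submodule ℝ F) [CompleteSpace S] {c : ℝ} (hc : 0 ≤ c)
    (hJ : ∀ x ∈ s, ∀ v ∈ S, ‖v‖ = 1 → ‖(J x).adjoint v‖ ≤ c) {x₀ x : E} {y : F} (hx₀ : x₀ ∈ s)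
    (hx : x ∈ s) (hfx : f x = y) :
    ‖(S.orthogonalProjectionOnto (f x₀ - y) : F)‖ / c ≤ ‖x - x₀‖ := by
  refine div_le_of_le_mul₀ hc (norm_nonneg _) ?_
  rw [← hfx, mul_comm, ← norm_sub_rev x₀]
  exact hs.norm_orthogonalProjectionOnto_image_sub_le hf S hc hJ hx hx₀

theorem Convex.max_norm_orthogonalProjectionOnto_div_le_of_eq {f : E → F} {J : E → E →L[ℝ] F}
    {s : Set E} (hs : Convex ℝ s) (hf : ∀ x ∈ s, HasFDerivWithinAt f (J x) s x)
    (S : Submodule ℝ F) [CompleteSpace S] {β ε : ℝ} (hβ : 0 ≤ β) (hε : 0 ≤ ε)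
    (hJS : ∀ x ∈ s, ∀ v ∈ S, ‖v‖ = 1 → ‖(J x).adjoint v‖ ≤ β)
    (hJSperp : ∀ x ∈ s, ∀ v ∈ Sᗮ, ‖v‖ = 1 → ‖(J x).adjoint v‖ ≤ ε) {x₀ x : E} {y : F} (hx₀ : x₀ ∈ s)
    (hx : x ∈ s) (hfx : f x = y) :
    max (‖(S.orthogonalProjectionOnto (f x₀ - y) : F)‖ / β)
      (‖(Sᗮ.orthogonalProjectionOnto (f x₀ - y) : F)‖ / ε) ≤ ‖x - x₀‖ :=
  max_le (hs.norm_orthogonalProjectionOnto_div_le_of_eq hf S hβ hJS hx₀ hx hfx)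
    (hs.norm_orthogonalProjectionOnto_div_le_of_eq hf Sᗮ hε hJSperp hx₀ hx hfx)

/-- Overfitting requires straying far from the initialization:
lower bound under a bimodal Jacobian. -/
theorem overfitting_requires_large_distance
    {p n : ℕ}
    (f : EuclideanSpace ℝ (Fin p) → EuclideanSpace ℝ (Fin n))
    (J : EuclideanSpace ℝ (Fin p) → (EuclideanSpace ℝ (Fin p) →L[ℝ] EuclideanSpace ℝ (Fin n)))
    (hJ : ∀ θ, HasFDerivAt f (J θ) θ)
    (y : EuclideanSpace ℝ (Fin n))
    (Splus : Submodule ℝ (EuclideanSpace ℝ (Fin n)))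
    (θ0 : EuclideanSpace ℝ (Fin p)) (α β ε R : ℝ)
    (hε : 0 < ε) (hαε : ε ≤ α) (hβ : α ≤ β)
    -- bimodal Jacobian over the closed ball D of radius R around θ₀
    (hsig : ∀ θ ∈ closedBall θ0 R,
      ∀ u : EuclideanSpace ℝ (Fin n), u ∈ Splus → ‖u‖ = 1 →
        α ≤ ‖(J θ).adjoint u‖ ∧ ‖(J θ).adjoint u‖ ≤ β)
    (hnoise : ∀ θ ∈ closedBall θ0 R,
      ∀ w : EuclideanSpace ℝ (Fin n), w ∈ Splusᗮ → ‖w‖ = 1 → ‖(J θ).adjoint w‖ ≤ ε) :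
    -- first part: if R is too small, no parameter in D achieves zero training loss
    (R < max (‖(Submodule.orthogonalProjectionOnto Splus (f θ0 - y) : EuclideanSpace ℝ (Fin n))‖ / β)
          (‖(Submodule.orthogonalProjectionOnto Splusᗮ (f θ0 - y) : EuclideanSpace ℝ (Fin n))‖ / ε) →
      ∀ θ ∈ closedBall θ0 R, f θ ≠ y) ∧
    -- second part: if the bimodal condition holds over all of ℝᵖ, any global fit is far away
    ((∀ θ : EuclideanSpace ℝ (Fin p),
        (∀ u : EuclideanSpace ℝ (Fin n), u ∈ Splus → ‖u‖ = 1 →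
          α ≤ ‖(J θ).adjoint u‖ ∧ ‖(J θ).adjoint u‖ ≤ β) ∧
        (∀ w : EuclideanSpace ℝ (Fin n), w ∈ Splusᗮ → ‖w‖ = 1 → ‖(J θ).adjoint w‖ ≤ ε)) →
      ∀ θ : EuclideanSpace ℝ (Fin p), f θ = y →
        max (‖(Submodule.orthogonalProjectionOnto Splus (f θ0 - y) : EuclideanSpace ℝ (Fin n))‖ / β)
            (‖(Submodule.orthogonalProjectionOnto Splusᗮ (f θ0 - y) : EuclideanSpace ℝ (Fin n))‖ / ε) ≤
          ‖θ - θ0‖) := by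
  have hβ₀ : 0 ≤ β := hε.le.trans (hαε.trans hβ)
  refine ⟨fun hR θ hθ hfθ => ?_, fun hall θ hfθ => ?_⟩
  · have hθR : ‖θ - θ0‖ ≤ R := mem_closedBall_iff_norm.mp hθ
    have hfar := (convex_closedBall θ0 R).max_norm_orthogonalProjectionOnto_div_le_of_eq
      (fun x _ => (hJ x).hasFDerivWithinAt) Splus hβ₀ hε.le
      (fun x hx u hu hu1 => (hsig x hx u hu hu1).2) hnoise
      (mem_closedBall_self ((norm_nonneg _).trans hθR)) hθ hfθ
    exact (hfar.trans hθR).not_gt hR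
  · exact convex_univ.max_norm_orthogonalProjectionOnto_div_le_of_eq
      (fun x _ => (hJ x).hasFDerivWithinAt) Splus hβ₀ hε.le
      (fun x _ u hu hu1 => ((hall x).1 u hu hu1).2) (fun x _ => (hall x).2)
      (mem_univ θ0) (mem_univ θ) hfθ
end

section
/- Let f: R^p → R^n be differentiable with Jacobian J(θ) ∈ R^{n×p}, y ∈ R^n, and consider a gradient step θ̂ = θ − η∇L(θ) on the loss L(θ) = ½‖f(θ) − y‖₂². Define the average Jacobian along the segment from θ to θ̂ as J(θ̂, θ) = ∫₀¹ J(θ + α(θ̂ − θ)) dα and set C(θ) = J(θ̂, θ)·J(θ)ᵀ ∈ R^{n×n}. Then the residuals r̂ = f(θ̂) − y and r = f(θ) − y satisfy r̂ = (I − η·C(θ))·r. -/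
/-! The fundamental theorem of calculus along the segment from `θ` to `θhat` gives
`f θhat - f θ = J(θhat, θ) (θhat - θ)`, and the gradient step is `θhat - θ = -η J(θ)ᵀ r`. -/

open intervalIntegral

theorem sub_eq_integral_segment_apply {E F : Type*} [NormedAddCommGroup E] [NormedSpace ℝ E]
    [NormedAddCommGroup F] [NormedSpace ℝ F] [CompleteSpace F]
    {f : E → F} {J : E → E →L[ℝ] F} (hJ : ∀ x, HasFDerivAt f (J x) x) (hJc : Continuous J)
    (x y : E) :
    f y - f x = (∫ a in (0:ℝ)..1, J (x + a • (y - x))) (y - x) := by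
  have hline : ∀ a : ℝ,
      HasDerivAt (fun a : ℝ => f (x + a • (y - x))) (J (x + a • (y - x)) (y - x)) a :=
    fun a => (hJ _).comp_hasDerivAt a <| by
      simpa using ((hasDerivAt_id a).smul_const (y - x)).const_add x
  have hcont : Continuous fun a : ℝ => J (x + a • (y - x)) := by fun_prop
  rw [ContinuousLinearMap.intervalIntegral_apply (hcont.intervalIntegrable 0 1),
    integral_eq_sub_of_hasDerivAt (fun a _ => hline a)
      ((hcont.clm_apply continuous_const).intervalIntegrable 0 1)]
  simp

/-- Linearization of the residual along one gradient step:
with θ̂ = θ − η∇L(θ) and C(θ) = J(θ̂, θ)·J(θ)ᵀ the product of the average Jacobian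
with the adjoint of the Jacobian, the residuals satisfy r̂ = (I − ηC(θ))r. -/
theorem residual_linearization
    {p n : ℕ}
    (f : EuclideanSpace ℝ (Fin p) → EuclideanSpace ℝ (Fin n))
    (J : EuclideanSpace ℝ (Fin p) → (EuclideanSpace ℝ (Fin p) →L[ℝ] EuclideanSpace ℝ (Fin n)))
    (hJ : ∀ θ, HasFDerivAt f (J θ) θ)
    (hJc : Continuous J)
    (y : EuclideanSpace ℝ (Fin n)) (η : ℝ)
    (θ θhat : EuclideanSpace ℝ (Fin p))
    (hθhat : θhat = θ - η • (J θ).adjoint (f θ - y)) :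
    f θhat - y =
      (f θ - y) -
        η • (∫ a in (0:ℝ)..1, J (θ + a • (θhat - θ))) ((J θ).adjoint (f θ - y)) := by
  have hstep : θhat - θ = -(η • (J θ).adjoint (f θ - y)) := by rw [hθhat]; abel
  rw [← sub_add_sub_cancel (f θhat) (f θ) y, sub_eq_integral_segment_apply hJ hJc θ θhat]
  generalize (∫ a in (0:ℝ)..1, J (θ + a • (θhat - θ))) = avgJ
  rw [hstep, map_neg, map_smul]
  abel
end

section
/- Let A, C ∈ R^{n×p} be matrices whose column spaces (ranges) are contained in a subspace S_+ ⊆ R^n, let P_{S_+} ∈ R^{n×n} be the orthogonal projection onto S_+, and suppose ‖A − C‖ ≤ α/2 (spectral norm) and C·Cᵀ ⪰ α²·P_{S_+}. Then for every vector r ∈ R^n, rᵀ·A·Cᵀ·r ≥ (1/2)·rᵀ·C·Cᵀ·r ≥ (α²/2)·rᵀ·P_{S_+}·r; that is, A·Cᵀ ⪰ (1/2)·C·Cᵀ ⪰ (α²/2)·P_{S_+} in the quadratic-form sense. -/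
noncomputable section

def l2 {ι : Type*} [Fintype ι] (v : ι → ℝ) : ℝ := Real.sqrt (∑ i, v i ^ 2)

def spec {ι κ : Type*} [Fintype ι] [Fintype κ] (M : ι → κ → ℝ) : ℝ :=
  sSup {r | ∃ v : κ → ℝ, l2 v ≤ 1 ∧ r = l2 fun i => ∑ j, M i j * v j}

/-- Regard a plain vector as an element of Euclidean space. -/
def toE {n : ℕ} (v : Fin n → ℝ) : EuclideanSpace ℝ (Fin n) :=
  (EuclideanSpace.equiv (Fin n) ℝ).symm v

/-! Write `u = Cᵀ r` and `w = (A - C)ᵀ r`, so that `rᵀ A Cᵀ r = ‖u‖² + ⟪w, u⟫`. Since `A - C` maps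
into `S₊`, its transpose only sees the component `P r` of `r`, hence
`‖w‖ ≤ ‖A - C‖ ‖P r‖ ≤ (α / 2) ‖P r‖ ≤ ‖u‖ / 2`, the last step by `C Cᵀ ⪰ α² P`.
Cauchy–Schwarz then gives `⟪w, u⟫ ≥ -‖u‖² / 2`. -/

open scoped InnerProduct
open Matrix

section Adjoint

variable {𝕜 E F : Type*} [RCLike 𝕜] [NormedAddCommGroup E] [InnerProductSpace 𝕜 E]
  [CompleteSpace E] [NormedAddCommGroup F] [InnerProductSpace 𝕜 F] [CompleteSpace F]

theorem ContinuousLinearMap.adjoint_starProjection_of_range_le {T : E →L[𝕜] F}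
    {K : Submodule 𝕜 F} [K.HasOrthogonalProjection] (hT : T.range ≤ K) (r : F) :
    (T†) (K.starProjection r) = (T†) r := by
  rw [eq_comm, ← sub_eq_zero, ← map_sub]
  have h := Submodule.orthogonal_le hT (K.sub_starProjection_mem_orthogonal r)
  rwa [T.orthogonal_range] at h

theorem ContinuousLinearMap.norm_adjoint_apply_le_of_range_le {T : E →L[𝕜] F}
    {K : Submodule 𝕜 F} [K.HasOrthogonalProjection] (hT : T.range ≤ K) (r : F) :
    ‖(T†) r‖ ≤ ‖T‖ * ‖K.starProjection r‖ := by
  rw [← T.adjoint_starProjection_of_range_le hT, ← LinearIsometryEquiv.norm_map adjoint T]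
  exact T†.le_opNorm _

end Adjoint

theorem half_norm_sq_le_inner_adjoint_apply {E F : Type*} [NormedAddCommGroup E]
    [InnerProductSpace ℝ E] [CompleteSpace E] [NormedAddCommGroup F] [InnerProductSpace ℝ F]
    [CompleteSpace F] {K : Submodule ℝ F} [K.HasOrthogonalProjection] {A C : E →L[ℝ] F}
    (hA : A.range ≤ K) (hC : C.range ≤ K) {α : ℝ} (hAC : ‖A - C‖ ≤ α / 2) {r : F}
    (hCr : α ^ 2 * ‖K.starProjection r‖ ^ 2 ≤ ‖(C†) r‖ ^ 2) :
    1 / 2 * ‖(C†) r‖ ^ 2 ≤ inner ℝ ((A†) r) ((C†) r) := by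
  have hα : 0 ≤ α := by linarith [norm_nonneg (A - C)]
  have hrange : (A - C).range ≤ K := by
    rintro _ ⟨v, rfl⟩
    exact K.sub_mem (hA ⟨v, rfl⟩) (hC ⟨v, rfl⟩)
  have hw : ‖((A - C)†) r‖ ≤ α / 2 * ‖K.starProjection r‖ :=
    ((A - C).norm_adjoint_apply_le_of_range_le hrange r).trans (by gcongr)
  have hu : α * ‖K.starProjection r‖ ≤ ‖(C†) r‖ :=
    (pow_le_pow_iff_left₀ (by positivity) (norm_nonneg _) two_ne_zero).1 (by rwa [mul_pow])
  have hsplit : (A†) r = (C†) r + ((A - C)†) r := by simp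
  calc 1 / 2 * ‖(C†) r‖ ^ 2
      = ‖(C†) r‖ ^ 2 - ‖(C†) r‖ * (‖(C†) r‖ / 2) := by ring
    _ ≤ ‖(C†) r‖ ^ 2 - ‖(C†) r‖ * ‖((A - C)†) r‖ := by gcongr; linarith
    _ ≤ ‖(C†) r‖ ^ 2 + inner ℝ (((A - C)†) r) ((C†) r) := by
        linarith [(abs_le.1 (abs_real_inner_le_norm (((A - C)†) r) ((C†) r))).1]
    _ = inner ℝ ((A†) r) ((C†) r) := by
        rw [hsplit, inner_add_left, real_inner_self_eq_norm_sq]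

theorem l2_eq_norm {ι : Type*} [Fintype ι] (v : ι → ℝ) :
    l2 v = ‖(WithLp.toLp 2 v : EuclideanSpace ℝ ι)‖ := by
  simp [l2, EuclideanSpace.norm_eq]

theorem spec_eq_norm_toEuclideanLin {ι κ : Type*} [Fintype ι] [Fintype κ] [DecidableEq κ]
    (M : Matrix ι κ ℝ) : spec M = ‖(toEuclideanLin M).toContinuousLinearMap‖ := by
  rw [← ContinuousLinearMap.sSup_unitClosedBall_eq_norm]
  refine congrArg sSup (Set.ext fun t => ?_)
  simp only [Set.mem_image, Metric.mem_closedBall, dist_zero_right]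
  constructor
  · rintro ⟨v, hv, rfl⟩
    refine ⟨WithLp.toLp 2 v, by rwa [← l2_eq_norm], ?_⟩
    rw [l2_eq_norm]; rfl
  · rintro ⟨x, hx, rfl⟩
    refine ⟨x.ofLp, by rwa [l2_eq_norm], ?_⟩
    rw [l2_eq_norm]; rfl

section MatrixAdjoint

variable {m n : Type*} [Fintype m] [Fintype n] [DecidableEq n]

theorem Matrix.range_toEuclideanLin_le {M : Matrix m n ℝ} {K : Submodule ℝ (EuclideanSpace ℝ m)}
    (hM : ∀ v : n → ℝ, WithLp.toLp 2 (M *ᵥ v) ∈ K) :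
    (toEuclideanLin M).toContinuousLinearMap.range ≤ K := by
  rintro _ ⟨v, rfl⟩
  exact hM v.ofLp

variable [DecidableEq m]

theorem Matrix.inner_adjoint_toEuclideanLin_apply (M N : Matrix m n ℝ)
    (r : EuclideanSpace ℝ m) :
    inner ℝ (((toEuclideanLin M).toContinuousLinearMap†) r)
        (((toEuclideanLin N).toContinuousLinearMap†) r) =
      ∑ j, (∑ i, r i * M i j) * (∑ i, r i * N i j) := by
  rw [← LinearMap.adjoint_toContinuousLinearMap, ← LinearMap.adjoint_toContinuousLinearMap,
    ← toEuclideanLin_conjTranspose_eq_adjoint, ← toEuclideanLin_conjTranspose_eq_adjoint]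
  simp [PiLp.inner_apply, mulVec, dotProduct, mul_comm]

theorem Matrix.norm_sq_adjoint_toEuclideanLin_apply (M : Matrix m n ℝ)
    (r : EuclideanSpace ℝ m) :
    ‖((toEuclideanLin M).toContinuousLinearMap†) r‖ ^ 2 = ∑ j, (∑ i, r i * M i j) ^ 2 := by
  rw [← real_inner_self_eq_norm_sq, inner_adjoint_toEuclideanLin_apply]
  simp only [sq]

theorem Matrix.half_sum_sq_vecMul_le_sum_vecMul_mul {K : Submodule ℝ (EuclideanSpace ℝ m)}
    [K.HasOrthogonalProjection] {A C : Matrix m n ℝ}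
    (hA : ∀ v : n → ℝ, WithLp.toLp 2 (A *ᵥ v) ∈ K) (hC : ∀ v : n → ℝ, WithLp.toLp 2 (C *ᵥ v) ∈ K)
    {α : ℝ} (hAC : spec (A - C) ≤ α / 2) {r : EuclideanSpace ℝ m}
    (hCr : α ^ 2 * ‖K.starProjection r‖ ^ 2 ≤ ∑ j, (∑ i, r i * C i j) ^ 2) :
    1 / 2 * ∑ j, (∑ i, r i * C i j) ^ 2 ≤ ∑ j, (∑ i, r i * A i j) * (∑ i, r i * C i j) := by
  have hAC' : ‖(toEuclideanLin A).toContinuousLinearMap -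
      (toEuclideanLin C).toContinuousLinearMap‖ ≤ α / 2 := by
    rw [← map_sub, ← map_sub, ← spec_eq_norm_toEuclideanLin]
    exact hAC
  have hA' := range_toEuclideanLin_le hA
  have hC' := range_toEuclideanLin_le hC
  rw [← norm_sq_adjoint_toEuclideanLin_apply C r] at hCr ⊢
  rw [← inner_adjoint_toEuclideanLin_apply A C r]
  exact half_norm_sq_le_inner_adjoint_apply hA' hC' hAC' hCr

end MatrixAdjoint

/-- Asymmetric PSD perturbation: if range(A), range(C) ⊆ S₊,
‖A − C‖ ≤ α/2 and CCᵀ ⪰ α²·P_{S₊}, then ACᵀ ⪰ ½CCᵀ ⪰ (α²/2)·P_{S₊} in the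
quadratic-form sense. -/
theorem asymmetric_psd_perturbation
    {n p : ℕ} (α : ℝ)
    (A C : Fin n → Fin p → ℝ)
    (Splus : Submodule ℝ (EuclideanSpace ℝ (Fin n)))
    (hrangeA : ∀ v : Fin p → ℝ, toE (fun i => ∑ j, A i j * v j) ∈ Splus)
    (hrangeC : ∀ v : Fin p → ℝ, toE (fun i => ∑ j, C i j * v j) ∈ Splus)
    (hAC : spec (A - C) ≤ α / 2)
    (hCC : ∀ r : EuclideanSpace ℝ (Fin n),
      α ^ 2 * ‖(Submodule.orthogonalProjection Splus r : EuclideanSpace ℝ (Fin n))‖ ^ 2 ≤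
        ∑ j, (∑ i, r i * C i j) ^ 2) :
    ∀ r : EuclideanSpace ℝ (Fin n),
      (1 / 2) * ∑ j, (∑ i, r i * C i j) ^ 2 ≤
          ∑ j, (∑ i, r i * A i j) * (∑ i, r i * C i j) ∧
        α ^ 2 / 2 * ‖(Submodule.orthogonalProjection Splus r : EuclideanSpace ℝ (Fin n))‖ ^ 2 ≤
          (1 / 2) * ∑ j, (∑ i, r i * C i j) ^ 2 :=
  fun r => ⟨half_sum_sq_vecMul_le_sum_vecMul_mul hrangeA hrangeC hAC (hCC r),
    by linarith [hCC r]⟩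
end
end

section
/- Let A ∈ R^{k×n} and B ∈ R^{d×n} be matrices such that every column of B has unit Euclidean norm. Let A∗B ∈ R^{kd×n} denote the columnwise Khatri–Rao product, whose i-th column is the Kronecker product a_i ⊗ b_i of the i-th columns of A and B. Then the spectral norms satisfy ‖A∗B‖ = √(‖(AᵀA) ⊙ (BᵀB)‖) ≤ ‖A‖, where ⊙ denotes the entrywise (Hadamard) product. -/
/-!
`spec` is the `ℓ²` operator norm of a real matrix, so with `K = A∗B` the C⋆-identity gives
`‖K‖² = ‖KᵀK‖`, and `KᵀK = (AᵀA) ⊙ (BᵀB)` entrywise. For the bound, the rows of `Kv` indexed by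
`q` form the vector `A (b_q ⊙ v)`, where `b_q` is the `q`-th row of `B`; hence
`‖Kv‖² ≤ ‖A‖² ∑_q ‖b_q ⊙ v‖² = ‖A‖² ∑_j v_j² ‖B e_j‖² = ‖A‖² ‖v‖²`.
-/

noncomputable section

/-- Columnwise Khatri–Rao product: the i-th column of A∗B is the Kronecker product of
the i-th columns of A and B. -/
def khatriRao {k d n : ℕ} (A : Fin k → Fin n → ℝ) (B : Fin d → Fin n → ℝ) :
    Fin k × Fin d → Fin n → ℝ := fun q i => A q.1 i * B q.2 i

end

open scoped Matrix Matrix.Norms.L2Operator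

section SpectralNorm

variable {ι κ : Type*} [Fintype ι] [Fintype κ]

theorem l2_eq_norm_toLp (v : ι → ℝ) : l2 v = ‖WithLp.toLp 2 v‖ := by
  simp [l2, EuclideanSpace.norm_eq]

theorem spec_eq_l2_opNorm [DecidableEq κ] (M : ι → κ → ℝ) : spec M = ‖Matrix.of M‖ := by
  rw [Matrix.l2_opNorm_def, ← ContinuousLinearMap.sSup_unitClosedBall_eq_norm, spec]
  congr 1
  ext r
  constructor
  · rintro ⟨v, hv, rfl⟩
    exact ⟨WithLp.toLp 2 v, by simpa [l2_eq_norm_toLp] using hv, (l2_eq_norm_toLp _).symm⟩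
  · rintro ⟨x, hx, rfl⟩
    exact ⟨x.ofLp, by simpa [l2_eq_norm_toLp] using hx, (l2_eq_norm_toLp _).symm⟩

theorem l2_sq (v : ι → ℝ) : l2 v ^ 2 = ∑ i, v i ^ 2 :=
  Real.sq_sqrt (Finset.sum_nonneg fun _ _ => sq_nonneg _)

theorem l2_nonneg (v : ι → ℝ) : 0 ≤ l2 v := Real.sqrt_nonneg _

theorem spec_nonneg (M : ι → κ → ℝ) : 0 ≤ spec M := by
  classical
  exact spec_eq_l2_opNorm M ▸ norm_nonneg _

theorem l2_mulVec_le (M : ι → κ → ℝ) (v : κ → ℝ) :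
    l2 (fun i => ∑ j, M i j * v j) ≤ spec M * l2 v := by
  classical
  rw [spec_eq_l2_opNorm, l2_eq_norm_toLp, l2_eq_norm_toLp]
  exact Matrix.l2_opNorm_mulVec (Matrix.of M) (WithLp.toLp 2 v)

theorem spec_le_of_forall {M : ι → κ → ℝ} {C : ℝ} (hC : 0 ≤ C)
    (h : ∀ v, l2 (fun i => ∑ j, M i j * v j) ≤ C * l2 v) : spec M ≤ C := by
  classical
  rw [spec_eq_l2_opNorm, Matrix.l2_opNorm_def]
  refine ContinuousLinearMap.opNorm_le_bound _ hC fun x => ?_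
  have := h x.ofLp
  rw [l2_eq_norm_toLp, l2_eq_norm_toLp] at this
  exact this

theorem spec_gram (M : ι → κ → ℝ) : spec (fun i j => ∑ q, M q i * M q j) = spec M ^ 2 := by
  classical
  have : Matrix.of (fun i j => ∑ q, M q i * M q j) = (Matrix.of M)ᴴ * Matrix.of M := by
    ext i j
    simp [Matrix.mul_apply]
  rw [spec_eq_l2_opNorm, spec_eq_l2_opNorm, this, Matrix.l2_opNorm_conjTranspose_mul_self, sq]

end SpectralNorm

section KhatriRao

variable {k d n : ℕ} (A : Fin k → Fin n → ℝ) (B : Fin d → Fin n → ℝ)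

theorem khatriRao_gram (i j : Fin n) :
    ∑ q, khatriRao A B q i * khatriRao A B q j =
      (∑ q, A q i * A q j) * (∑ q, B q i * B q j) := by
  rw [Fintype.sum_prod_type, Finset.sum_mul_sum]
  refine Finset.sum_congr rfl fun p _ => Finset.sum_congr rfl fun q _ => ?_
  simp only [khatriRao]
  ring

theorem sum_sq_khatriRao_mulVec (v : Fin n → ℝ) :
    ∑ pq, (∑ j, khatriRao A B pq j * v j) ^ 2 =
      ∑ q, ∑ p, (∑ j, A p j * (B q j * v j)) ^ 2 := by
  rw [Fintype.sum_prod_type, Finset.sum_comm]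
  simp only [khatriRao, mul_assoc]

variable {B} in
theorem spec_khatriRao_le (hB : ∀ i, l2 (fun q => B q i) ≤ 1) :
    spec (khatriRao A B) ≤ spec A := by
  refine spec_le_of_forall (spec_nonneg A) fun v => ?_
  have hB_sq : ∀ j, ∑ q, B q j ^ 2 ≤ 1 := fun j => by
    rw [← l2_sq]
    exact pow_le_one₀ (l2_nonneg _) (hB j)
  rw [← pow_le_pow_iff_left₀ (l2_nonneg _) (by positivity [spec_nonneg A, l2_nonneg v])
    two_ne_zero]
  calc l2 (fun pq => ∑ j, khatriRao A B pq j * v j) ^ 2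
      = ∑ q, l2 (fun p => ∑ j, A p j * (B q j * v j)) ^ 2 := by
        simp only [l2_sq, sum_sq_khatriRao_mulVec]
    _ ≤ ∑ q, (spec A * l2 (fun j => B q j * v j)) ^ 2 := by
        gcongr with q
        exacts [l2_nonneg _, l2_mulVec_le A _]
    _ = spec A ^ 2 * ∑ j, v j ^ 2 * ∑ q, B q j ^ 2 := by
        simp only [mul_pow, l2_sq, ← Finset.mul_sum]
        rw [Finset.sum_comm]
        simp only [Finset.mul_sum, mul_comm]
    _ ≤ spec A ^ 2 * ∑ j, v j ^ 2 := by
        gcongr with j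
        exact mul_le_of_le_one_right (sq_nonneg _) (hB_sq j)
    _ = (spec A * l2 v) ^ 2 := by rw [mul_pow, l2_sq]

end KhatriRao

/-- Schur: spectral norm of the Khatri–Rao product: if the columns
of B have unit norm, then ‖A∗B‖ = √‖(AᵀA) ⊙ (BᵀB)‖ ≤ ‖A‖. -/
theorem khatriRao_spectral_norm
    {k d n : ℕ} (A : Fin k → Fin n → ℝ) (B : Fin d → Fin n → ℝ)
    (hB : ∀ i : Fin n, l2 (fun q => B q i) = 1) :
    spec (khatriRao A B) =
        Real.sqrt (spec fun i j : Fin n =>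
          (∑ q, A q i * A q j) * (∑ q, B q i * B q j)) ∧
      spec (khatriRao A B) ≤ spec A := by
  refine ⟨?_, spec_khatriRao_le A fun i => (hB i).le⟩
  simp_rw [← khatriRao_gram A B, spec_gram]
  exact (Real.sqrt_sq (spec_nonneg _)).symm
end
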